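/- arXiv:2404.03900 — 4 statements merged into one kernel-verified Lean document; each statement's English description precedes it below -/
import Mathlib

section
/- Let β > 0, M ≥ 2, and let ξ_1, …, ξ_M ∈ ℝ^d be memory patterns with m = max_{ν} ‖ξ_ν‖. Let 𝓜 ⊆ {1, …, M} be a support set of size k, let μ ∈ 𝓜, and let x ∈ ℝ^d be any query. Then ‖T_Sparse(x) − ξ_μ‖ ≤ m (M + k − 2) exp(−β Δ̃_μ(x)), where Δ̃_μ(x) = ⟨x, ξ_μ⟩ − max_{ν≠μ} ⟨x, ξ_ν⟩. -/
/-!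
Write `p` for the softmax weights of the scores `s ν = β ⟪x, ξ ν⟫` and `ε = exp (-β Δ̃_μ(x))`.
Every weight `p ν` with `ν ≠ μ` is at most `exp (s ν - s μ) ≤ ε`, so the missing mass
`1 - p μ = ∑_{ν ≠ μ} p ν` is at most `(M - 1) ε`. Since
`T_Sparse(x) - ξ μ = ∑_{ν ∈ 𝓜, ν ≠ μ} p ν • ξ ν - (1 - p μ) • ξ μ`, the triangle inequality
bounds its norm by `m ((k - 1) ε + (M - 1) ε)`.
-/

open Finset Real
open scoped RealInnerProductSpace

section ConcentratedCombination

variable {ι E : Type*} [DecidableEq ι] [SeminormedAddCommGroup E] [NormedSpace ℝ E]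
  {p : ι → ℝ} {μ : ι} {v : ι → E} {m : ℝ}

theorem norm_sum_smul_sub_le {s : Finset ι} (hμ : μ ∈ s) (hp : ∀ i, 0 ≤ p i) (hpμ : p μ ≤ 1)
    (hv : ∀ i, ‖v i‖ ≤ m) :
    ‖∑ i ∈ s, p i • v i - v μ‖ ≤ m * (∑ i ∈ s.erase μ, p i + (1 - p μ)) := by
  have hsplit : ∑ i ∈ s, p i • v i - v μ = ∑ i ∈ s.erase μ, p i • v i - (1 - p μ) • v μ := by
    rw [← sum_erase_add s _ hμ, sub_smul, one_smul]
    abel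
  calc ‖∑ i ∈ s, p i • v i - v μ‖
      ≤ ∑ i ∈ s.erase μ, ‖p i • v i‖ + ‖(1 - p μ) • v μ‖ := by
        rw [hsplit]
        exact (norm_sub_le _ _).trans (add_le_add_left (norm_sum_le _ _) _)
    _ ≤ ∑ i ∈ s.erase μ, p i * m + (1 - p μ) * m := by
        rw [norm_smul_of_nonneg (sub_nonneg.2 hpμ)]
        gcongr with i
        · rw [norm_smul_of_nonneg (hp i)]
          exact mul_le_mul_of_nonneg_left (hv i) (hp i)
        · exact hv μ
    _ = m * (∑ i ∈ s.erase μ, p i + (1 - p μ)) := by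
        rw [← sum_mul]
        ring

theorem sum_erase_le_card_sub_one_mul {s : Finset ι} (hμ : μ ∈ s) {ε : ℝ}
    (hε : ∀ i ∈ s, i ≠ μ → p i ≤ ε) :
    ∑ i ∈ s.erase μ, p i ≤ (#s - 1 : ℝ) * ε := by
  calc ∑ i ∈ s.erase μ, p i
      ≤ #(s.erase μ) • ε :=
        sum_le_card_nsmul _ _ _ fun i hi => hε i (mem_of_mem_erase hi) (ne_of_mem_erase hi)
    _ = (#s - 1 : ℝ) * ε := by
        rw [card_erase_of_mem hμ, nsmul_eq_mul, Nat.cast_pred (card_pos.2 ⟨μ, hμ⟩)]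

theorem norm_sum_smul_sub_le_of_forall_ne_le [Fintype ι] {s : Finset ι} (hμ : μ ∈ s)
    (hp : ∀ i, 0 ≤ p i) (hp_sum : ∑ i, p i = 1) (hv : ∀ i, ‖v i‖ ≤ m) {ε : ℝ}
    (hε : ∀ i ≠ μ, p i ≤ ε) :
    ‖∑ i ∈ s, p i • v i - v μ‖ ≤ m * (Fintype.card ι + #s - 2) * ε := by
  have hmass : 1 - p μ = ∑ i ∈ univ.erase μ, p i := by
    rw [sum_erase_eq_sub (mem_univ μ), hp_sum]
  have hpμ : p μ ≤ 1 := sub_nonneg.1 (hmass ▸ sum_nonneg fun i _ => hp i)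
  have hm : 0 ≤ m := (norm_nonneg _).trans (hv μ)
  have hsupport := sum_erase_le_card_sub_one_mul hμ fun i _ => hε i
  have hrest : 1 - p μ ≤ (Fintype.card ι - 1 : ℝ) * ε := by
    rw [hmass, ← card_univ]
    exact sum_erase_le_card_sub_one_mul (mem_univ μ) fun i _ => hε i
  calc ‖∑ i ∈ s, p i • v i - v μ‖
      ≤ m * (∑ i ∈ s.erase μ, p i + (1 - p μ)) := norm_sum_smul_sub_le hμ hp hpμ hv
    _ ≤ m * ((#s - 1 : ℝ) * ε + (Fintype.card ι - 1 : ℝ) * ε) := by gcongr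
    _ = m * (Fintype.card ι + #s - 2) * ε := by ring

end ConcentratedCombination

section Softmax

variable {ι : Type*} [Fintype ι]

noncomputable def softmax (s : ι → ℝ) (i : ι) : ℝ :=
  exp (s i) / ∑ j, exp (s j)

theorem softmax_nonneg (s : ι → ℝ) (i : ι) : 0 ≤ softmax s i :=
  div_nonneg (exp_pos _).le (sum_nonneg fun _ _ => (exp_pos _).le)

theorem sum_softmax [Nonempty ι] (s : ι → ℝ) : ∑ i, softmax s i = 1 := by
  simp only [softmax, ← sum_div]
  exact div_self (sum_pos (fun _ _ => exp_pos _) univ_nonempty).ne'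

theorem softmax_le_exp_sub (s : ι → ℝ) (i j : ι) : softmax s i ≤ exp (s i - s j) := by
  rw [exp_sub]
  exact div_le_div_of_nonneg_left (exp_pos _).le (exp_pos _)
    (single_le_sum (fun k _ => (exp_pos (s k)).le) (mem_univ j))

end Softmax

theorem sparse_retrieval_error_bound_general
    {d M : ℕ} (β : ℝ) (hβ : 0 < β)
    (ξ : Fin M → EuclideanSpace ℝ (Fin d))
    (m : ℝ) (hm : IsGreatest (Set.range fun ν => ‖ξ ν‖) m)
    (𝓜 : Finset (Fin M)) (k : ℕ) (hk : 𝓜.card = k)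
    (μ : Fin M) (hμ : μ ∈ 𝓜)
    (x : EuclideanSpace ℝ (Fin d))
    (maxOther : ℝ)
    (hmax : IsGreatest {r : ℝ | ∃ ν : Fin M, ν ≠ μ ∧ r = ⟪x, ξ ν⟫} maxOther) :
    ‖(∑ ν ∈ 𝓜,
        (Real.exp (β * ⟪x, ξ ν⟫) / ∑ lam : Fin M, Real.exp (β * ⟪x, ξ lam⟫)) • ξ ν)
      - ξ μ‖
      ≤ m * ((M : ℝ) + (k : ℝ) - 2) * Real.exp (-β * (⟪x, ξ μ⟫ - maxOther)) := by
  have : Nonempty (Fin M) := ⟨μ⟩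
  set score : Fin M → ℝ := fun ν => β * ⟪x, ξ ν⟫
  have hweight : ∀ ν ≠ μ, softmax score ν ≤ exp (-β * (⟪x, ξ μ⟫ - maxOther)) := fun ν hν =>
    (softmax_le_exp_sub score ν μ).trans
      (exp_le_exp.2 (by nlinarith [hmax.2 ⟨ν, hν, rfl⟩]))
  have hbound := norm_sum_smul_sub_le_of_forall_ne_le hμ (softmax_nonneg score)
    (sum_softmax score) (fun ν => hm.2 ⟨ν, rfl⟩) hweight
  rwa [Fintype.card_fin, hk] at hbound

/-- sparsity-dependent retrieval error bound for the sparse-structured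
modern Hopfield model:
`‖T_Sparse(x) − ξ_μ‖ ≤ m (M + k − 2) exp(−β Δ̃_μ(x))`. -/
theorem sparse_retrieval_error_bound
    {d M : ℕ} (hM : 2 ≤ M) (β : ℝ) (hβ : 0 < β)
    (ξ : Fin M → EuclideanSpace ℝ (Fin d))
    (m : ℝ) (hm : IsGreatest (Set.range fun ν => ‖ξ ν‖) m)
    (𝓜 : Finset (Fin M)) (k : ℕ) (hk : 𝓜.card = k)
    (μ : Fin M) (hμ : μ ∈ 𝓜)
    (x : EuclideanSpace ℝ (Fin d))
    (maxOther : ℝ)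
    (hmax : IsGreatest {r : ℝ | ∃ ν : Fin M, ν ≠ μ ∧ r = ⟪x, ξ ν⟫} maxOther) :
    ‖(∑ ν ∈ 𝓜,
        (Real.exp (β * ⟪x, ξ ν⟫) / ∑ lam : Fin M, Real.exp (β * ⟪x, ξ lam⟫)) • ξ ν)
      - ξ μ‖
      ≤ m * ((M : ℝ) + (k : ℝ) - 2) * Real.exp (-β * (⟪x, ξ μ⟫ - maxOther)) :=
  sparse_retrieval_error_bound_general β hβ ξ m hm 𝓜 k hk μ hμ x maxOther hmax
end

section
/- Let β > 0, M ≥ 2, and let ξ_1, …, ξ_M ∈ ℝ^d be memory patterns with m = max_{ν} ‖ξ_ν‖ and m > 0. Let 𝓜 ⊆ {1, …, M} be a support set of size k, let μ ∈ 𝓜, let R > 0, and let S_μ = {x ∈ ℝ^d : ‖x − ξ_μ‖ ≤ R}. Suppose x ∈ S_μ and the well-separation condition holds: Δ_μ ≥ (1/β) ln((M + k − 2) m / R) + 2 m R, where Δ_μ = min_{ν≠μ} (⟨ξ_μ, ξ_μ⟩ − ⟨ξ_μ, ξ_ν⟩). Then T_Sparse(x) ∈ S_μ, i.e., ‖T_Sparse(x)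 − ξ_μ‖ ≤ R; in particular the retrieval dynamics T_Sparse maps S_μ into itself. -/
/-!
Write `p` for the softmax weights. Each weight of a pattern `ν ≠ μ` is at most
`p ν / p μ = exp (β (⟪x, ξ ν⟫ - ⟪x, ξ μ⟫))`, and for `x` within `R` of `ξ μ` the exponent is at
most `β (2 m R - Δ)`. Writing `T x - ξ μ = ∑_{ν ∈ 𝓜, ν ≠ μ} p ν (ξ ν - ξ μ) - (∑_{ν ∉ 𝓜} p ν) ξ μ`,
the `k - 1` terms of the first sum cost at most `2 m` each and the `M - k` weights of the second
at most `m` each, so `‖T x - ξ μ‖ ≤ (M + k - 2) m exp (β (2 m R - Δ))`, which the separation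
condition makes at most `R`.
-/

open scoped RealInnerProductSpace
open Finset

section Softmax

variable {ι E : Type*} [Fintype ι] [NormedAddCommGroup E] [InnerProductSpace ℝ E]

noncomputable def softmaxWeight (β : ℝ) (ξ : ι → E) (x : E) (ν : ι) : ℝ :=
  Real.exp (β * ⟪x, ξ ν⟫) / ∑ j, Real.exp (β * ⟪x, ξ j⟫)

variable (β : ℝ) (ξ : ι → E) (x : E)

theorem softmaxWeight_nonneg (ν : ι) : 0 ≤ softmaxWeight β ξ x ν :=
  div_nonneg (Real.exp_pos _).le (sum_nonneg fun _ _ => (Real.exp_pos _).le)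

theorem sum_softmaxWeight [Nonempty ι] : ∑ ν, softmaxWeight β ξ x ν = 1 := by
  simp only [softmaxWeight, ← sum_div]
  exact div_self (sum_pos (fun _ _ => Real.exp_pos _) univ_nonempty).ne'

theorem softmaxWeight_le_exp_sub (μ ν : ι) :
    softmaxWeight β ξ x ν ≤ Real.exp (β * ⟪x, ξ ν⟫ - β * ⟪x, ξ μ⟫) := by
  rw [Real.exp_sub, softmaxWeight]
  gcongr
  exact single_le_sum (f := fun j => Real.exp (β * ⟪x, ξ j⟫))
    (fun _ _ => (Real.exp_pos _).le) (mem_univ μ)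

end Softmax

theorem inner_sub_inner_le_norm_mul_norm_sub {E : Type*} [NormedAddCommGroup E]
    [InnerProductSpace ℝ E] (x a b : E) :
    ⟪x, b⟫ - ⟪x, a⟫ ≤ ‖x - a‖ * ‖b - a‖ - (⟪a, a⟫ - ⟪a, b⟫) := by
  have hsplit : ⟪x, b⟫ - ⟪x, a⟫ = ⟪x - a, b - a⟫ - (⟪a, a⟫ - ⟪a, b⟫) := by
    simp only [inner_sub_left, inner_sub_right]
    ring
  rw [hsplit]
  gcongr
  exact real_inner_le_norm _ _

theorem softmaxWeight_le_exp_of_separated {ι E : Type*} [Fintype ι] [NormedAddCommGroup E]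
    [InnerProductSpace ℝ E] {β m R Δ : ℝ} {ξ : ι → E} {x : E} {μ ν : ι} (hβ : 0 ≤ β)
    (hξ : ∀ j, ‖ξ j‖ ≤ m) (hx : ‖x - ξ μ‖ ≤ R) (hΔ : Δ ≤ ⟪ξ μ, ξ μ⟫ - ⟪ξ μ, ξ ν⟫) :
    softmaxWeight β ξ x ν ≤ Real.exp (β * (2 * m * R - Δ)) := by
  have hdiff : ‖ξ ν - ξ μ‖ ≤ 2 * m := by
    linarith [norm_sub_le (ξ ν) (ξ μ), hξ ν, hξ μ]
  have hgap : ⟪x, ξ ν⟫ - ⟪x, ξ μ⟫ ≤ 2 * m * R - Δ := by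
    have := inner_sub_inner_le_norm_mul_norm_sub x (ξ μ) (ξ ν)
    nlinarith [norm_nonneg (x - ξ μ), norm_nonneg (ξ ν - ξ μ)]
  refine (softmaxWeight_le_exp_sub β ξ x μ ν).trans (Real.exp_le_exp.mpr ?_)
  rw [← mul_sub]
  exact mul_le_mul_of_nonneg_left hgap hβ

section Decomposition

variable {ι E : Type*} [Fintype ι] [DecidableEq ι] [NormedAddCommGroup E] [NormedSpace ℝ E]
  {s : Finset ι} {p : ι → ℝ} {ξ : ι → E} {μ : ι}

theorem sum_smul_sub_eq_of_sum_eq_one (hp : ∑ ν, p ν = 1) (hμ : μ ∈ s) :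
    ∑ ν ∈ s, p ν • ξ ν - ξ μ
      = ∑ ν ∈ s.erase μ, p ν • (ξ ν - ξ μ) - (∑ ν ∈ sᶜ, p ν) • ξ μ := by
  have hcompl : ∑ ν ∈ sᶜ, p ν = 1 - p μ - ∑ ν ∈ s.erase μ, p ν := by
    linarith [sum_add_sum_compl s p, add_sum_erase s p hμ]
  rw [← add_sum_erase s _ hμ, hcompl]
  simp only [smul_sub, sum_sub_distrib, ← sum_smul, sub_smul, one_smul]
  abel

theorem norm_sum_smul_sub_le_s7 (hp0 : ∀ ν, 0 ≤ p ν) (hp1 : ∑ ν, p ν = 1) {ε m : ℝ}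
    (hε : ∀ ν ≠ μ, p ν ≤ ε) (hξ : ∀ ν, ‖ξ ν‖ ≤ m) (hμ : μ ∈ s) :
    ‖∑ ν ∈ s, p ν • ξ ν - ξ μ‖ ≤ (Fintype.card ι + #s - 2) * m * ε := by
  have hm : 0 ≤ m := (norm_nonneg _).trans (hξ μ)
  have hin : ‖∑ ν ∈ s.erase μ, p ν • (ξ ν - ξ μ)‖ ≤ #(s.erase μ) • (ε * (2 * m)) := by
    refine (norm_sum_le_of_le _ fun ν hν => ?_).trans_eq (sum_const _)
    have hpν := hε ν (ne_of_mem_erase hν)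
    rw [norm_smul, Real.norm_of_nonneg (hp0 ν)]
    exact mul_le_mul hpν (by linarith [norm_sub_le (ξ ν) (ξ μ), hξ ν, hξ μ])
      (norm_nonneg _) ((hp0 ν).trans hpν)
  have hout : ‖(∑ ν ∈ sᶜ, p ν) • ξ μ‖ ≤ #sᶜ • ε * m := by
    have hsum : ∑ ν ∈ sᶜ, p ν ≤ #sᶜ • ε :=
      sum_le_card_nsmul _ _ _ fun ν hν => hε ν fun h => mem_compl.mp hν (h ▸ hμ)
    rw [norm_smul, Real.norm_of_nonneg (sum_nonneg fun ν _ => hp0 ν)]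
    exact mul_le_mul hsum (hξ μ) (norm_nonneg _) ((sum_nonneg fun ν _ => hp0 ν).trans hsum)
  have hcard : (#sᶜ : ℝ) = Fintype.card ι - #s := by
    rw [card_compl, Nat.cast_sub (card_le_univ s)]
  rw [sum_smul_sub_eq_of_sum_eq_one hp1 hμ]
  calc _ ≤ _ := norm_sub_le _ _
    _ ≤ #(s.erase μ) • (ε * (2 * m)) + #sᶜ • ε * m := add_le_add hin hout
    _ = _ := by
      rw [nsmul_eq_mul, nsmul_eq_mul, cast_card_erase_of_mem hμ, hcard]
      ring

end Decomposition

theorem mul_exp_le_of_le_neg_log {C R t : ℝ} (hR : 0 < R) (ht : t ≤ -Real.log (C / R)) :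
    C * Real.exp t ≤ R := by
  rcases le_or_gt C 0 with hC | hC
  · exact (mul_nonpos_of_nonpos_of_nonneg hC (Real.exp_pos t).le).trans hR.le
  · calc C * Real.exp t ≤ C * Real.exp (-Real.log (C / R)) := by gcongr
      _ = R := by
        rw [Real.exp_neg, Real.exp_log (div_pos hC hR), inv_div]
        field_simp

theorem sparse_well_separation_general
    {d M : ℕ} (β : ℝ) (hβ : 0 < β)
    (ξ : Fin M → EuclideanSpace ℝ (Fin d))
    (m : ℝ) (hm : IsGreatest (Set.range fun ν => ‖ξ ν‖) m)
    (𝓜 : Finset (Fin M)) (k : ℕ) (hk : 𝓜.card = k)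
    (μ : Fin M) (hμ : μ ∈ 𝓜)
    (R : ℝ) (hR : 0 < R)
    (Δ : ℝ)
    (hΔ : IsLeast {r : ℝ | ∃ ν : Fin M, ν ≠ μ ∧ r = ⟪ξ μ, ξ μ⟫ - ⟪ξ μ, ξ ν⟫} Δ)
    (hsep : Δ ≥ (1 / β) * Real.log (((M : ℝ) + (k : ℝ) - 2) * m / R) + 2 * m * R)
    (x : EuclideanSpace ℝ (Fin d)) (hx : ‖x - ξ μ‖ ≤ R) :
    ‖(∑ ν ∈ 𝓜,
        (Real.exp (β * ⟪x, ξ ν⟫) / ∑ lam : Fin M, Real.exp (β * ⟪x, ξ lam⟫)) • ξ ν)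
      - ξ μ‖ ≤ R := by
  have : Nonempty (Fin M) := ⟨μ⟩
  have hξ : ∀ ν, ‖ξ ν‖ ≤ m := fun ν => hm.2 ⟨ν, rfl⟩
  have hweight : ∀ ν ≠ μ, softmaxWeight β ξ x ν ≤ Real.exp (β * (2 * m * R - Δ)) :=
    fun ν hν => softmaxWeight_le_exp_of_separated hβ.le hξ hx (hΔ.2 ⟨ν, hν, rfl⟩)
  have hnorm := norm_sum_smul_sub_le_s7 (softmaxWeight_nonneg β ξ x) (sum_softmaxWeight β ξ x)
    hweight hξ hμ
  rw [Fintype.card_fin, hk] at hnorm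
  have hexponent : β * (2 * m * R - Δ) ≤ -Real.log (((M : ℝ) + k - 2) * m / R) := by
    have := mul_le_mul_of_nonneg_left hsep hβ.le
    rw [mul_add, ← mul_assoc, mul_one_div_cancel hβ.ne', one_mul] at this
    linarith
  exact hnorm.trans (mul_exp_le_of_le_neg_log hR hexponent)

/-- well-separation condition — under the separation lower bound,
the sparse-structured retrieval dynamics maps the ball `S_μ` into itself. -/
theorem sparse_well_separation
    {d M : ℕ} (hM : 2 ≤ M) (β : ℝ) (hβ : 0 < β)
    (ξ : Fin M → EuclideanSpace ℝ (Fin d))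
    (m : ℝ) (hm : IsGreatest (Set.range fun ν => ‖ξ ν‖) m) (hm0 : 0 < m)
    (𝓜 : Finset (Fin M)) (k : ℕ) (hk : 𝓜.card = k)
    (μ : Fin M) (hμ : μ ∈ 𝓜)
    (R : ℝ) (hR : 0 < R)
    (Δ : ℝ)
    (hΔ : IsLeast {r : ℝ | ∃ ν : Fin M, ν ≠ μ ∧ r = ⟪ξ μ, ξ μ⟫ - ⟪ξ μ, ξ ν⟫} Δ)
    (hsep : Δ ≥ (1 / β) * Real.log (((M : ℝ) + (k : ℝ) - 2) * m / R) + 2 * m * R)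
    (x : EuclideanSpace ℝ (Fin d)) (hx : ‖x - ξ μ‖ ≤ R) :
    ‖(∑ ν ∈ 𝓜,
        (Real.exp (β * ⟪x, ξ ν⟫) / ∑ lam : Fin M, Real.exp (β * ⟪x, ξ lam⟫)) • ξ ν)
      - ξ μ‖ ≤ R :=
  sparse_well_separation_general β hβ ξ m hm 𝓜 k hk μ hμ R hR Δ hΔ hsep x hx
end

section
/- Let β > 0, M ≥ 2, and let ξ_1, …, ξ_M ∈ ℝ^d be memory patterns with m = max_{ν} ‖ξ_ν‖. Then for every query x ∈ ℝ^d and every μ ∈ {1, …, M}, the dense retrieval dynamics satisfies ‖T_Dense(x) − ξ_μ‖ ≤ 2 m (M − 1) exp(−β Δ̃_μ(x)), where Δ̃_μ(x) = ⟨x, ξ_μ⟩ − max_{ν≠μ} ⟨x, ξ_ν⟩. -/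
/-! Since the softmax weights sum to one, `T_Dense(x) - ξ_μ` is the weighted sum of the differences
`ξ_ν - ξ_μ` over `ν ≠ μ`. Each such difference has norm at most `2m`, and each weight is at most
`exp(β⟨x, ξ_ν⟩) / exp(β⟨x, ξ_μ⟩) ≤ exp(-β Δ̃_μ(x))`, because the partition function dominates its
`μ`-th term. -/

open Finset
open scoped RealInnerProductSpace

theorem norm_sum_smul_sub_le_sum_erase {ι E : Type*} [Fintype ι] [DecidableEq ι]
    [SeminormedAddCommGroup E] [NormedSpace ℝ E] {p : ι → ℝ} (hp : ∀ i, 0 ≤ p i)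
    (hp_sum : ∑ i, p i = 1) (v : ι → E) (j : ι) :
    ‖∑ i, p i • v i - v j‖ ≤ ∑ i ∈ univ.erase j, p i * ‖v i - v j‖ := by
  have hdiff : ∑ i, p i • v i - v j = ∑ i, p i • (v i - v j) := by
    simp only [smul_sub, sum_sub_distrib, ← sum_smul, hp_sum, one_smul]
  calc ‖∑ i, p i • v i - v j‖
      ≤ ∑ i, ‖p i • (v i - v j)‖ := hdiff ▸ norm_sum_le _ _
    _ = ∑ i, p i * ‖v i - v j‖ := by
        simp only [norm_smul, Real.norm_of_nonneg (hp _)]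
    _ = ∑ i ∈ univ.erase j, p i * ‖v i - v j‖ :=
        (sum_erase univ (f := fun i => p i * ‖v i - v j‖) (by simp)).symm

theorem Real.exp_div_sum_exp_le {ι : Type*} [Fintype ι] (s : ι → ℝ) (i j : ι) :
    Real.exp (s i) / ∑ k, Real.exp (s k) ≤ Real.exp (s i - s j) := by
  rw [Real.exp_sub]
  gcongr
  exact single_le_sum (fun k _ => (Real.exp_pos (s k)).le) (mem_univ j)

theorem dense_retrieval_error_bound_general
    {d M : ℕ} (β : ℝ) (hβ : 0 < β)
    (ξ : Fin M → EuclideanSpace ℝ (Fin d))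
    (m : ℝ) (hm : IsGreatest (Set.range fun ν => ‖ξ ν‖) m) :
    ∀ (x : EuclideanSpace ℝ (Fin d)) (μ : Fin M) (maxOther : ℝ),
      IsGreatest {r : ℝ | ∃ ν : Fin M, ν ≠ μ ∧ r = ⟪x, ξ ν⟫} maxOther →
      ‖(∑ ν : Fin M,
          (Real.exp (β * ⟪x, ξ ν⟫) / ∑ lam : Fin M, Real.exp (β * ⟪x, ξ lam⟫)) • ξ ν)
        - ξ μ‖
        ≤ 2 * m * ((M : ℝ) - 1) * Real.exp (-β * (⟪x, ξ μ⟫ - maxOther)) := by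
  intro x μ maxOther hmax
  set p : Fin M → ℝ := fun ν =>
    Real.exp (β * ⟪x, ξ ν⟫) / ∑ lam : Fin M, Real.exp (β * ⟪x, ξ lam⟫)
  have hp_sum : ∑ ν, p ν = 1 := by
    rw [← sum_div, div_self (sum_pos (fun _ _ => Real.exp_pos _) ⟨μ, mem_univ μ⟩).ne']
  have hterm : ∀ ν ∈ univ.erase μ,
      p ν * ‖ξ ν - ξ μ‖ ≤ Real.exp (-β * (⟪x, ξ μ⟫ - maxOther)) * (2 * m) := by
    intro ν hν
    have hweight : p ν ≤ Real.exp (-β * (⟪x, ξ μ⟫ - maxOther)) := by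
      refine (Real.exp_div_sum_exp_le (fun k => β * ⟪x, ξ k⟫) ν μ).trans (Real.exp_le_exp.2 ?_)
      have : ⟪x, ξ ν⟫ ≤ maxOther := hmax.2 ⟨ν, ne_of_mem_erase hν, rfl⟩
      nlinarith
    have hdist : ‖ξ ν - ξ μ‖ ≤ 2 * m := by
      linarith [norm_sub_le (ξ ν) (ξ μ), hm.2 ⟨ν, rfl⟩, hm.2 ⟨μ, rfl⟩]
    exact mul_le_mul hweight hdist (norm_nonneg _) (Real.exp_pos _).le
  calc _ ≤ ∑ ν ∈ univ.erase μ, p ν * ‖ξ ν - ξ μ‖ :=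
        norm_sum_smul_sub_le_sum_erase (fun _ => div_nonneg (Real.exp_pos _).le
          (sum_nonneg fun _ _ => (Real.exp_pos _).le)) hp_sum ξ μ
    _ ≤ ∑ ν ∈ univ.erase μ, Real.exp (-β * (⟪x, ξ μ⟫ - maxOther)) * (2 * m) := sum_le_sum hterm
    _ = 2 * m * ((M : ℝ) - 1) * Real.exp (-β * (⟪x, ξ μ⟫ - maxOther)) := by
        rw [sum_const, nsmul_eq_mul, cast_card_erase_of_mem (mem_univ μ), card_univ,
          Fintype.card_fin]
        ring

/-- retrieval error bound for the dense modern Hopfield dynamics: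
`‖T_Dense(x) − ξ_μ‖ ≤ 2 m (M − 1) exp(−β Δ̃_μ(x))`. -/
theorem dense_retrieval_error_bound
    {d M : ℕ} (hM : 2 ≤ M) (β : ℝ) (hβ : 0 < β)
    (ξ : Fin M → EuclideanSpace ℝ (Fin d))
    (m : ℝ) (hm : IsGreatest (Set.range fun ν => ‖ξ ν‖) m) :
    ∀ (x : EuclideanSpace ℝ (Fin d)) (μ : Fin M) (maxOther : ℝ),
      IsGreatest {r : ℝ | ∃ ν : Fin M, ν ≠ μ ∧ r = ⟪x, ξ ν⟫} maxOther →
      ‖(∑ ν : Fin M,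
          (Real.exp (β * ⟪x, ξ ν⟫) / ∑ lam : Fin M, Real.exp (β * ⟪x, ξ lam⟫)) • ξ ν)
        - ξ μ‖
        ≤ 2 * m * ((M : ℝ) - 1) * Real.exp (-β * (⟪x, ξ μ⟫ - maxOther)) :=
  dense_retrieval_error_bound_general β hβ ξ m hm
end

section
/- Let γ denote the standard Gaussian measure on ℝ^d (the d-fold product of the standard normal distribution on ℝ). Then for all x, y ∈ ℝ^d, ∫ exp(⟨p, x⟩ − ‖x‖²/2) · exp(⟨p, y⟩ − ‖y‖²/2) dγ(p) = exp(⟨x, y⟩). In particular, the positive random feature ψ_u(p) = exp(⟨p, u⟩ − ‖u‖²/2) gives an unbiased estimator of the exponential kernel: E_{p∼γ}[ψ_x(p) ψ_y(p)] = exp(⟨x, y⟩). -/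
/-! The product of the two features is `exp ⟪p, x + y⟫ · exp (-(‖x‖² + ‖y‖²) / 2)`. Since `⟪·, z⟫`
is a centred Gaussian of variance `‖z‖²` under the standard Gaussian, its moment generating function
at `1` is `exp (‖x + y‖² / 2)`, and `‖x + y‖² - ‖x‖² - ‖y‖² = 2 ⟪x, y⟫`. -/

open scoped RealInnerProductSpace

open MeasureTheory

/-- The standard Gaussian measure on `ℝ^d`, the `d`-fold product of the standard normal
distribution, transported to `EuclideanSpace ℝ (Fin d)`. -/
noncomputable def stdGaussian (d : ℕ) : Measure (EuclideanSpace ℝ (Fin d)) :=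
  (Measure.pi fun _ : Fin d => ProbabilityTheory.gaussianReal 0 1).map
    (WithLp.equiv 2 (Fin d → ℝ)).symm

lemma stdGaussian_eq_stdGaussian_euclideanSpace (d : ℕ) :
    stdGaussian d = ProbabilityTheory.stdGaussian (EuclideanSpace ℝ (Fin d)) :=
  ProbabilityTheory.map_pi_eq_stdGaussian

namespace ProbabilityTheory

lemma IsGaussian.integral_exp_strongDual {E : Type*} [NormedAddCommGroup E] [NormedSpace ℝ E]
    [MeasurableSpace E] [BorelSpace E] (μ : Measure E) [IsGaussian μ] (L : StrongDual ℝ E) :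
    ∫ x, Real.exp (L x) ∂μ = Real.exp (μ[L] + Var[L; μ] / 2) := by
  have h := mgf_gaussianReal (IsGaussian.map_eq_gaussianReal (μ := μ) L) 1
  simp only [mgf, one_mul, mul_one, one_pow] at h
  rwa [Real.coe_toNNReal _ (variance_nonneg _ _)] at h

lemma integral_exp_inner_stdGaussian {E : Type*} [NormedAddCommGroup E] [InnerProductSpace ℝ E]
    [FiniteDimensional ℝ E] [MeasurableSpace E] [BorelSpace E] (z : E) :
    ∫ p, Real.exp ⟪p, z⟫ ∂(stdGaussian E) = Real.exp (‖z‖ ^ 2 / 2) := by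
  have h := IsGaussian.integral_exp_strongDual (stdGaussian E) (innerSL ℝ z)
  rw [integral_strongDual_stdGaussian, variance_dual_stdGaussian, innerSL_apply_norm,
    zero_add] at h
  simpa only [innerSL_apply_apply, real_inner_comm] using h

end ProbabilityTheory

/-- the positive random feature identity — the PRF
`ψ_u(p) = exp(⟨p, u⟩ − ‖u‖²/2)` gives an unbiased estimator of the exponential kernel:
`E_{p∼γ}[ψ_x(p) ψ_y(p)] = exp(⟨x, y⟩)`. -/
theorem positive_random_feature_identity
    {d : ℕ} (x y : EuclideanSpace ℝ (Fin d)) :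
    ∫ p, Real.exp (⟪p, x⟫ - ‖x‖ ^ 2 / 2) * Real.exp (⟪p, y⟫ - ‖y‖ ^ 2 / 2)
        ∂(stdGaussian d)
      = Real.exp ⟪x, y⟫ := by
  have split_features : ∀ p : EuclideanSpace ℝ (Fin d),
      Real.exp (⟪p, x⟫ - ‖x‖ ^ 2 / 2) * Real.exp (⟪p, y⟫ - ‖y‖ ^ 2 / 2)
        = Real.exp ⟪p, x + y⟫ * Real.exp (-(‖x‖ ^ 2 + ‖y‖ ^ 2) / 2) := by
    intro p
    rw [← Real.exp_add, ← Real.exp_add, inner_add_right]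
    ring_nf
  simp_rw [split_features]
  rw [integral_mul_const, stdGaussian_eq_stdGaussian_euclideanSpace,
    ProbabilityTheory.integral_exp_inner_stdGaussian, ← Real.exp_add, norm_add_sq_real]
  ring_nf
end
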